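/- Let d ≥ 1. Let Π be the SNP system with delays consisting of neurons σ1, σ2, σ3 and synapses (1,2), (2,1), (2,3), where σ1 initially holds one spike and has the single rule a → a (delay 0), σ2 has the single rule a → a; d, and σ3 is a sink neuron; σ1 and σ2 continuously replenish one another's spike, forming an infinite iterative loop, and the total runtime of Π (the time at which the sink first receives a spike) is 1 + d. Then there exists an SNP system without delays Π̄, containing an iterative loop of two neurons that replenish one another's spike, whose total runtime is 2 + d and whose sink neuron obtains exactly one spike at that time; hence Π̄ simulates the iterative routing of Π with a time offset of exactly 1. -/

import Mathlib

/-!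
Formalization of Spiking Neural P (SNP) systems with delays, following
Cabarle–Buño–Adorna, "Time After Time: Notes on Delays In Spiking Neural
P Systems".

A rule `E/a^c → a^b; d` is modelled by the set `lang ⊆ ℕ` of spike counts `k`
with `a^k ∈ L(E)`, together with `c`, `b` and the delay `d`.  Each neuron has
at most one rule (sink neurons, which never fire, have none).  A configuration
assigns to every neuron its spike count `n i` and its remaining closed time
`clk i`.  If a rule with delay `d` fires during the step leading to the
configuration at time `t`, the produced spikes become visible in the
configuration at time `t + d`; spikes sent to a closed neuron are lost.
The first rule application is counted as happening at time `0`, so the total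
runtime (time needed for a spike to arrive at the sink neurons from the source
neurons) is one less than the index of the first configuration in which all
sink neurons hold a spike.
-/

open scoped Classical

structure SNPRule where
  /-- the spike counts accepted by the regular expression `E` -/
  lang : Set ℕ
  c : ℕ
  b : ℕ
  d : ℕ
  c_pos : 1 ≤ c
  b_le_c : b ≤ c

/-- The rule `a^c → a^b; d` (whose regular expression is `E = a^c`). -/
def simpleRule (c b d : ℕ) (hc : 1 ≤ c) (hb : b ≤ c) : SNPRule :=
  ⟨{c}, c, b, d, hc, hb⟩

/-- The rule `a⁺/a → a` (no delay). -/
def plusRule : SNPRule :=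
  ⟨{k | 1 ≤ k}, 1, 1, 0, le_refl 1, le_refl 1⟩

/-- An SNP system of degree `m`: initial spike counts, (at most) one rule per
neuron, and an irreflexive synapse relation. -/
structure SNPSystem (m : ℕ) where
  init : Fin m → ℕ
  rule : Fin m → Option SNPRule
  syn : Fin m → Fin m → Prop
  syn_irrefl : ∀ i, ¬ syn i i

/-- A configuration: spike counts and remaining closed times. -/
structure SNPConfig (m : ℕ) where
  n : Fin m → ℕ
  clk : Fin m → ℕ

namespace SNPSystem

variable {m m' : ℕ}

/-- Neuron `i` is open and its rule is applicable in configuration `C`. -/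
def enabled (S : SNPSystem m) (C : SNPConfig m) (i : Fin m) : Prop :=
  C.clk i = 0 ∧ ∃ r, S.rule i = some r ∧ C.n i ∈ r.lang ∧ r.c ≤ C.n i

/-- Spikes emitted by neuron `i` during the current step: either its rule fires
with delay `0`, or its closed period (after firing a rule with delay `≥ 1`)
expires now. -/
noncomputable def emits (S : SNPSystem m) (C : SNPConfig m) (i : Fin m) : ℕ :=
  match S.rule i with
  | none => 0
  | some r =>
      if C.clk i = 0 ∧ C.n i ∈ r.lang ∧ r.c ≤ C.n i ∧ r.d = 0 then r.b
      else if C.clk i = 1 then r.b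
      else 0

/-- Spikes consumed by neuron `i` if its rule fires in the current step. -/
noncomputable def consumed (S : SNPSystem m) (C : SNPConfig m) (i : Fin m) : ℕ :=
  match S.rule i with
  | none => 0
  | some r => if C.clk i = 0 ∧ C.n i ∈ r.lang ∧ r.c ≤ C.n i then r.c else 0

/-- Remaining closed time of neuron `i` after the current step. -/
noncomputable def nextClk (S : SNPSystem m) (C : SNPConfig m) (i : Fin m) : ℕ :=
  match S.rule i with
  | none => C.clk i - 1
  | some r =>
      if C.clk i = 0 ∧ C.n i ∈ r.lang ∧ r.c ≤ C.n i then r.d else C.clk i - 1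

/-- Spikes sent towards neuron `j` during the current step. -/
noncomputable def sent (S : SNPSystem m) (C : SNPConfig m) (j : Fin m) : ℕ :=
  ∑ i, if S.syn i j then S.emits C i else 0

/-- Spikes actually received by neuron `j` during the current step (spikes sent
to a closed neuron are lost). -/
noncomputable def recv (S : SNPSystem m) (C : SNPConfig m) (j : Fin m) : ℕ :=
  if S.nextClk C j = 0 then S.sent C j else 0

/-- One (synchronized, global-clock) computation step. -/
noncomputable def step (S : SNPSystem m) (C : SNPConfig m) : SNPConfig m where
  n := fun i => C.n i - S.consumed C i + S.recv C i
  clk := fun i => S.nextClk C i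

/-- The initial configuration: all neurons open, spike counts given by `init`. -/
def initConfig (S : SNPSystem m) : SNPConfig m where
  n := S.init
  clk := fun _ => 0

/-- The configuration at time `t`. -/
noncomputable def conf (S : SNPSystem m) (t : ℕ) : SNPConfig m :=
  (S.step)^[t] S.initConfig

/-- A source neuron: no incoming synapses. -/
def isSource (S : SNPSystem m) (i : Fin m) : Prop :=
  ∀ j, ¬ S.syn j i

/-- A sink neuron: no outgoing synapses, and it never fires. -/
def isSink (S : SNPSystem m) (i : Fin m) : Prop :=
  (∀ j, ¬ S.syn i j) ∧ S.rule i = none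

/-- Total time needed for a spike to arrive at the sink neuron(s) from the
source neuron(s); the first rule application counts as happening at time `0`,
whence the `- 1`. -/
noncomputable def totalRuntime (S : SNPSystem m) : ℕ :=
  sInf {t | ∀ i, S.isSink i → 1 ≤ (S.conf t).n i} - 1

/-- The first time (counted as in `totalRuntime`) at which neuron `i` holds a
spike. -/
noncomputable def firstArrivalTime (S : SNPSystem m) (i : Fin m) : ℕ :=
  sInf {t | 1 ≤ (S.conf t).n i} - 1

/-- The first time (counted as in `totalRuntime`) at which neuron `i` spikes. -/
noncomputable def firstSpikeTime (S : SNPSystem m) (i : Fin m) : ℕ :=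
  sInf {t | 1 ≤ S.emits (S.conf t) i}

/-- An SNP system without delays: every rule has `d = 0`. -/
def delayFree (S : SNPSystem m) : Prop :=
  ∀ i r, S.rule i = some r → r.d = 0

/-- `T.Simulates S`: `T` has no delays; spikes arrive at the sink neurons of `T`
at the same time as at the sink neurons of `S` or offset by some constant
integer `k`; and the number of spikes arriving at the sink neurons of `T`
equals that for `S` or is a factor of one of the delays of `S`. -/
noncomputable def Simulates (T : SNPSystem m') (S : SNPSystem m) : Prop :=
  T.delayFree ∧
  (∃ k : ℤ, (T.totalRuntime : ℤ) = (S.totalRuntime : ℤ) + k) ∧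
  (∀ j, T.isSink j → ∀ i, S.isSink i →
    (T.conf (T.totalRuntime + 1)).n j = (S.conf (S.totalRuntime + 1)).n i ∨
    ∃ p r, S.rule p = some r ∧ (T.conf (T.totalRuntime + 1)).n j ∣ r.d)

/-- Sequential routing along a synapse `(i, j)`. -/
def sequentialAt (S : SNPSystem m) (i j : Fin m) : Prop :=
  S.syn i j

/-- Iterative routing: the two neurons form a loop. -/
def iterativeAt (S : SNPSystem m) (i j : Fin m) : Prop :=
  S.syn i j ∧ S.syn j i

/-- A split at neuron `i`: `i` sends its spike to at least two neurons. -/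
def splitAt (S : SNPSystem m) (i : Fin m) : Prop :=
  ∃ j k, j ≠ k ∧ S.syn i j ∧ S.syn i k

/-- A join at neuron `j`: at least two neurons send their spikes to `j`. -/
def joinAt (S : SNPSystem m) (j : Fin m) : Prop :=
  ∃ i k, i ≠ k ∧ S.syn i j ∧ S.syn k j

end SNPSystem

/-- The iterative system `Π` of the statement: `σ1` (one spike, rule `a → a`) and
`σ2` (rule `a → a; d`) form a loop, and `σ2` also feeds the sink `σ3`. -/
def iterPiB (d : ℕ) : SNPSystem 3 where
  init := ![1, 0, 0]
  rule := ![some (simpleRule 1 1 0 (le_refl 1) (le_refl 1)),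
            some (simpleRule 1 1 d (le_refl 1) (le_refl 1)), none]
  syn := fun i j =>
    (i.val = 0 ∧ j.val = 1) ∨ (i.val = 1 ∧ j.val = 0) ∨ (i.val = 1 ∧ j.val = 2)
  syn_irrefl := by intro i h; omega

/-!
In `Π` the spike circulates through the loop `σ1 → σ2 → σ1` with period `d + 2` (one step in
`σ1`, then `σ2` fires and stays closed for `d` steps), and the sink receives one spike per
period. In `Π̄` both loop neurons hold a spike and fire at every step, so the neuron fed by
`σ2` gains one spike per step; it fires exactly when it holds `d + 2` spikes, which happens at
step `d + 2`, and the sink then holds its first spike one step later than in `Π`.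
-/

open SNPSystem

@[ext]
theorem SNPConfig.ext {m : ℕ} {C D : SNPConfig m} (hn : C.n = D.n) (hclk : C.clk = D.clk) :
    C = D := by
  cases C; cases D; simp_all

namespace SNPSystem

variable {m m' : ℕ} (S : SNPSystem m)

theorem conf_succ (t : ℕ) : S.conf (t + 1) = S.step (S.conf t) :=
  Function.iterate_succ_apply' _ _ _

theorem conf_add (s t : ℕ) : S.conf (t + s) = S.step^[t] (S.conf s) :=
  Function.iterate_add_apply _ _ _ _

theorem totalRuntime_eq_of_firstArrival {s : Fin m} (hsink : ∀ i, S.isSink i ↔ i = s) {k : ℕ}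
    (harrive : 1 ≤ (S.conf (k + 1)).n s) (hbefore : ∀ t ≤ k, (S.conf t).n s = 0) :
    S.totalRuntime = k := by
  have hset : {t | ∀ i, S.isSink i → 1 ≤ (S.conf t).n i} = {t | 1 ≤ (S.conf t).n s} := by
    ext t
    simp only [Set.mem_ofPred_eq, hsink, forall_eq]
  have hinf : sInf {t | 1 ≤ (S.conf t).n s} = k + 1 := by
    refine le_antisymm (Nat.sInf_le harrive) (le_csInf ⟨_, harrive⟩ fun t ht => ?_)
    by_contra! hlt
    have := hbefore t (by omega)
    simp only [Set.mem_ofPred_eq] at ht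
    omega
  rw [totalRuntime, hset, hinf, Nat.add_sub_cancel]

theorem simulates_of_sink_count_eq {T : SNPSystem m'} (hT : T.delayFree) {s : Fin m'}
    {s' : Fin m} (hTsink : ∀ j, T.isSink j ↔ j = s) (hSsink : ∀ i, S.isSink i ↔ i = s')
    (hcount : (T.conf (T.totalRuntime + 1)).n s = (S.conf (S.totalRuntime + 1)).n s') :
    T.Simulates S := by
  refine ⟨hT, ⟨T.totalRuntime - S.totalRuntime, by ring⟩, fun j hj i hi => Or.inl ?_⟩
  rwa [(hTsink j).1 hj, (hSsink i).1 hi]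

end SNPSystem

theorem exists_le_of_forall_mul_add {P : ℕ → Prop} {p : ℕ} (hp : 0 < p) (r : ℕ)
    (h : ∀ k, P (k * p + r)) (t : ℕ) : ∃ t', t ≤ t' ∧ P t' :=
  ⟨t * p + r, le_add_right (Nat.le_mul_of_pos_right t hp), h t⟩

section Delayed

variable {d : ℕ}

theorem iterPiB_isSink_iff (i : Fin 3) : (iterPiB d).isSink i ↔ i = 2 := by
  fin_cases i <;> simp [isSink, iterPiB]

theorem iterPiB_step_fire (q : ℕ) :
    (iterPiB d).step ⟨![1, 0, q], ![0, 0, 0]⟩ = ⟨![0, 1, q], ![0, 0, 0]⟩ := by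
  ext i <;> fin_cases i <;>
    simp [step, consumed, recv, sent, emits, nextClk, iterPiB, simpleRule, Fin.sum_univ_three]

theorem iterPiB_step_fire_delayed (hd : 1 ≤ d) (q : ℕ) :
    (iterPiB d).step ⟨![0, 1, q], ![0, 0, 0]⟩ = ⟨![0, 0, q], ![0, d, 0]⟩ := by
  ext i <;> fin_cases i <;>
    simp [step, consumed, recv, sent, emits, nextClk, iterPiB, simpleRule, Fin.sum_univ_three] <;>
    omega

theorem iterPiB_step_closed (q : ℕ) {c : ℕ} (hc : 2 ≤ c) :
    (iterPiB d).step ⟨![0, 0, q], ![0, c, 0]⟩ = ⟨![0, 0, q], ![0, c - 1, 0]⟩ := by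
  ext i <;> fin_cases i <;>
    simp [step, consumed, recv, sent, emits, nextClk, iterPiB, simpleRule, Fin.sum_univ_three,
      show c ≠ 1 by omega]

theorem iterPiB_step_reopen (q : ℕ) :
    (iterPiB d).step ⟨![0, 0, q], ![0, 1, 0]⟩ = ⟨![1, 0, q + 1], ![0, 0, 0]⟩ := by
  ext i <;> fin_cases i <;>
    simp [step, consumed, recv, sent, emits, nextClk, iterPiB, simpleRule, Fin.sum_univ_three]

theorem iterPiB_iterate_closed (q : ℕ) {j c : ℕ} (hj : j < c) :
    (iterPiB d).step^[j] ⟨![0, 0, q], ![0, c, 0]⟩ = ⟨![0, 0, q], ![0, c - j, 0]⟩ := by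
  induction j generalizing c with
  | zero => rfl
  | succ j ih =>
    rw [Function.iterate_succ_apply, iterPiB_step_closed q (by omega), ih (by omega),
      Nat.sub_sub, Nat.add_comm 1 j]

theorem iterPiB_conf_zero : (iterPiB d).conf 0 = ⟨![1, 0, 0], ![0, 0, 0]⟩ := by
  ext i <;> fin_cases i <;> rfl

theorem iterPiB_conf_one : (iterPiB d).conf 1 = ⟨![0, 1, 0], ![0, 0, 0]⟩ := by
  rw [conf_succ, iterPiB_conf_zero, iterPiB_step_fire]

theorem iterPiB_conf_closed (hd : 1 ≤ d) {j : ℕ} (hj : j < d) :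
    (iterPiB d).conf (j + 2) = ⟨![0, 0, 0], ![0, d - j, 0]⟩ := by
  rw [conf_add, conf_succ, iterPiB_conf_one, iterPiB_step_fire_delayed hd,
    iterPiB_iterate_closed 0 hj]

theorem iterPiB_iterate_period (hd : 1 ≤ d) (q : ℕ) :
    (iterPiB d).step^[d + 2] ⟨![1, 0, q], ![0, 0, 0]⟩ = ⟨![1, 0, q + 1], ![0, 0, 0]⟩ := by
  rw [show d + 2 = (d - 1 + 1) + 1 + 1 by omega, Function.iterate_succ_apply,
    Function.iterate_succ_apply, iterPiB_step_fire, iterPiB_step_fire_delayed hd,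
    Function.iterate_succ_apply', iterPiB_iterate_closed q (by omega),
    show d - (d - 1) = 1 by omega, iterPiB_step_reopen]

theorem iterPiB_conf_period (hd : 1 ≤ d) (k : ℕ) :
    (iterPiB d).conf (k * (d + 2)) = ⟨![1, 0, k], ![0, 0, 0]⟩ := by
  induction k with
  | zero => rw [Nat.zero_mul, iterPiB_conf_zero]
  | succ k ih =>
    rw [Nat.succ_mul, Nat.add_comm, conf_add, ih, iterPiB_iterate_period hd]

theorem iterPiB_conf_sink_eq_zero (hd : 1 ≤ d) {t : ℕ} (ht : t ≤ d + 1) :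
    ((iterPiB d).conf t).n 2 = 0 := by
  match t with
  | 0 => rw [iterPiB_conf_zero]; rfl
  | 1 => rw [iterPiB_conf_one]; rfl
  | j + 2 => rw [iterPiB_conf_closed hd (by omega)]; rfl

theorem iterPiB_totalRuntime (hd : 1 ≤ d) : (iterPiB d).totalRuntime = 1 + d := by
  refine totalRuntime_eq_of_firstArrival _ iterPiB_isSink_iff ?_
    fun t ht => iterPiB_conf_sink_eq_zero hd (by omega)
  rw [show 1 + d + 1 = 1 * (d + 2) by ring, iterPiB_conf_period hd]
  exact le_rfl

theorem iterPiB_sink_at_totalRuntime (hd : 1 ≤ d) :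
    ((iterPiB d).conf ((iterPiB d).totalRuntime + 1)).n 2 = 1 := by
  rw [iterPiB_totalRuntime hd, show 1 + d + 1 = 1 * (d + 2) by ring, iterPiB_conf_period hd]
  rfl

theorem iterPiB_enabled_fst (hd : 1 ≤ d) (k : ℕ) :
    (iterPiB d).enabled ((iterPiB d).conf (k * (d + 2) + 0)) 0 := by
  rw [Nat.add_zero, iterPiB_conf_period hd]
  exact ⟨rfl, _, rfl, rfl, le_rfl⟩

theorem iterPiB_enabled_snd (hd : 1 ≤ d) (k : ℕ) :
    (iterPiB d).enabled ((iterPiB d).conf (k * (d + 2) + 1)) 1 := by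
  rw [conf_succ, iterPiB_conf_period hd, iterPiB_step_fire]
  exact ⟨rfl, _, rfl, rfl, le_rfl⟩

end Delayed

section DelayFree

variable {d : ℕ}

def iterPiBar (d : ℕ) : SNPSystem 4 where
  init := ![1, 1, 0, 0]
  rule := ![some (simpleRule 1 1 0 le_rfl le_rfl), some (simpleRule 1 1 0 le_rfl le_rfl),
            some (simpleRule (d + 2) 1 0 (by omega) (by omega)), none]
  syn := fun i j => (i.val = 0 ∧ j.val = 1) ∨ (i.val = 1 ∧ j.val = 0) ∨
    (i.val = 1 ∧ j.val = 2) ∨ (i.val = 2 ∧ j.val = 3)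
  syn_irrefl := by intro i h; omega

theorem iterPiBar_delayFree : (iterPiBar d).delayFree := by
  intro i r h
  fin_cases i <;> simp only [iterPiBar] at h <;> cases h <;> rfl

theorem iterPiBar_isSink_iff (i : Fin 4) : (iterPiBar d).isSink i ↔ i = 3 := by
  fin_cases i <;> simp [isSink, iterPiBar]

theorem iterPiBar_step_accumulate {x : ℕ} (hx : x ≠ d + 2) (y : ℕ) :
    (iterPiBar d).step ⟨![1, 1, x, y], ![0, 0, 0, 0]⟩ =
      ⟨![1, 1, x + 1, y], ![0, 0, 0, 0]⟩ := by
  ext i <;> fin_cases i <;>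
    simp [step, consumed, recv, sent, emits, nextClk, iterPiBar, simpleRule, Fin.sum_univ_four,
      hx]

theorem iterPiBar_step_fire (y : ℕ) :
    (iterPiBar d).step ⟨![1, 1, d + 2, y], ![0, 0, 0, 0]⟩ =
      ⟨![1, 1, 1, y + 1], ![0, 0, 0, 0]⟩ := by
  ext i <;> fin_cases i <;>
    simp [step, consumed, recv, sent, emits, nextClk, iterPiBar, simpleRule, Fin.sum_univ_four]

theorem iterPiBar_conf_of_le {t : ℕ} (ht : t ≤ d + 2) :
    (iterPiBar d).conf t = ⟨![1, 1, t, 0], ![0, 0, 0, 0]⟩ := by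
  induction t with
  | zero => ext i <;> fin_cases i <;> rfl
  | succ t ih => rw [conf_succ, ih (by omega), iterPiBar_step_accumulate (by omega)]

theorem iterPiBar_conf_arrival :
    (iterPiBar d).conf (d + 3) = ⟨![1, 1, 1, 1], ![0, 0, 0, 0]⟩ := by
  rw [conf_succ, iterPiBar_conf_of_le le_rfl, iterPiBar_step_fire]

theorem iterPiBar_exists_conf_eq (t : ℕ) :
    ∃ x y, (iterPiBar d).conf t = ⟨![1, 1, x, y], ![0, 0, 0, 0]⟩ := by
  induction t with
  | zero => exact ⟨0, 0, iterPiBar_conf_of_le (Nat.zero_le _)⟩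
  | succ t ih =>
    obtain ⟨x, y, hxy⟩ := ih
    rw [conf_succ, hxy]
    by_cases hx : x = d + 2
    · exact ⟨1, y + 1, hx ▸ iterPiBar_step_fire y⟩
    · exact ⟨x + 1, y, iterPiBar_step_accumulate hx y⟩

theorem iterPiBar_enabled (t : ℕ) {i : Fin 4} (hi : i = 0 ∨ i = 1) :
    (iterPiBar d).enabled ((iterPiBar d).conf t) i := by
  obtain ⟨x, y, hxy⟩ := iterPiBar_exists_conf_eq (d := d) t
  rw [hxy]
  rcases hi with rfl | rfl <;> exact ⟨rfl, _, rfl, rfl, le_rfl⟩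

theorem iterPiBar_totalRuntime : (iterPiBar d).totalRuntime = 2 + d := by
  refine totalRuntime_eq_of_firstArrival _ iterPiBar_isSink_iff ?_
    fun t ht => by rw [iterPiBar_conf_of_le (by omega)]; rfl
  rw [show 2 + d + 1 = d + 3 by ring, iterPiBar_conf_arrival]
  exact le_rfl

theorem iterPiBar_sink_at_totalRuntime :
    ((iterPiBar d).conf ((iterPiBar d).totalRuntime + 1)).n 3 = 1 := by
  rw [iterPiBar_totalRuntime, show 2 + d + 1 = d + 3 by ring, iterPiBar_conf_arrival]
  rfl

end DelayFree

theorem iterative_single_delay_simulation (d : ℕ) (hd : 1 ≤ d) :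
    -- σ1 and σ2 continuously replenish one another's spike (infinite iterative loop)
    (∀ t, ∃ t', t ≤ t' ∧ (iterPiB d).enabled ((iterPiB d).conf t') 0) ∧
    (∀ t, ∃ t', t ≤ t' ∧ (iterPiB d).enabled ((iterPiB d).conf t') 1) ∧
    -- the total runtime of Π is 1 + d
    (iterPiB d).totalRuntime = 1 + d ∧
    -- there is a delay-free Π̄ containing an iterative loop of two neurons that
    -- replenish one another's spike, with total runtime 2 + d, whose sink obtains
    -- exactly one spike at that time
    (∃ (m : ℕ) (T : SNPSystem m) (i j snk : Fin m),
      T.delayFree ∧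
      i ≠ j ∧ T.syn i j ∧ T.syn j i ∧
      (∀ t, ∃ t', t ≤ t' ∧ T.enabled (T.conf t') i) ∧
      (∀ t, ∃ t', t ≤ t' ∧ T.enabled (T.conf t') j) ∧
      T.isSink snk ∧ (∀ s, T.isSink s → s = snk) ∧
      T.totalRuntime = 2 + d ∧
      (T.conf (T.totalRuntime + 1)).n snk = 1 ∧
      -- hence Π̄ simulates the iterative routing of Π with a time offset of exactly 1
      T.Simulates (iterPiB d) ∧
      T.totalRuntime = (iterPiB d).totalRuntime + 1) := by
  have hperiod : 0 < d + 2 := by omega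
  have hsim : (iterPiBar d).Simulates (iterPiB d) :=
    simulates_of_sink_count_eq _ iterPiBar_delayFree iterPiBar_isSink_iff iterPiB_isSink_iff
      (by rw [iterPiBar_sink_at_totalRuntime, iterPiB_sink_at_totalRuntime hd])
  refine ⟨exists_le_of_forall_mul_add hperiod 0 (iterPiB_enabled_fst hd),
    exists_le_of_forall_mul_add hperiod 1 (iterPiB_enabled_snd hd), iterPiB_totalRuntime hd,
    4, iterPiBar d, 0, 1, 3, iterPiBar_delayFree, by decide, Or.inl ⟨rfl, rfl⟩,
    Or.inr (Or.inl ⟨rfl, rfl⟩), fun t => ⟨t, le_rfl, iterPiBar_enabled t (Or.inl rfl)⟩,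
    fun t => ⟨t, le_rfl, iterPiBar_enabled t (Or.inr rfl)⟩, (iterPiBar_isSink_iff 3).2 rfl,
    fun s => (iterPiBar_isSink_iff s).1, iterPiBar_totalRuntime, iterPiBar_sink_at_totalRuntime,
    hsim, ?_⟩
  rw [iterPiBar_totalRuntime, iterPiB_totalRuntime hd]
  ring
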